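/- arXiv:2406.19019 — 6 statements merged into one kernel-verified Lean document; each statement's English description precedes it below -/
import Mathlib

section
/- Let (η_n) and (ζ_n) be sequences of positive reals with η_n non-increasing, and let C > 1 and ζ_{n,m} ≤ ζ_n be positive reals satisfying for all n,m ∈ ℕ the inequality η_n · η_{m+1} / (η_{m+1} + C·ζ_{n,m}) ≤ η_{n+m}. If there exists n with η_n/ζ_n > C, then inf_n η_n > 0. -/
theorem stmt0 (η ζ : ℕ → ℝ) (ζ' : ℕ → ℕ → ℝ) (C : ℝ)
    (hC : 1 < C)
    (hηpos : ∀ n, 1 ≤ n → 0 < η n)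
    (hζpos : ∀ n, 1 ≤ n → 0 < ζ n)
    (hηmono : ∀ n m, 1 ≤ n → n ≤ m → η m ≤ η n)
    (hζ'pos : ∀ n m, 1 ≤ n → 1 ≤ m → 0 < ζ' n m)
    (hζ'le : ∀ n m, 1 ≤ n → 1 ≤ m → ζ' n m ≤ ζ n)
    (hrec : ∀ n m, 1 ≤ n → 1 ≤ m →
      η n * η (m + 1) / (η (m + 1) + C * ζ' n m) ≤ η (n + m))
    (hex : ∃ n, 1 ≤ n ∧ C < η n / ζ n) :
    ∃ ε > 0, ∀ n, 1 ≤ n → ε ≤ η n := by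
  obtain ⟨n₀, hn₀, hratio⟩ := hex
  have hζ0 := hζpos n₀ hn₀
  have hη0 := hηpos n₀ hn₀
  have hCz : C * ζ n₀ < η n₀ := (lt_div_iff₀ hζ0).mp hratio
  refine ⟨η n₀ - C * ζ n₀, by linarith, ?_⟩
  intro k hk
  rcases le_or_gt k n₀ with h | h
  · have h1 := hηmono k n₀ hk h
    have h2 : 0 < C * ζ n₀ := mul_pos (by linarith) hζ0
    linarith
  · obtain ⟨m, rfl⟩ : ∃ m, k = n₀ + m := ⟨k - n₀, by omega⟩
    have hm : 1 ≤ m := by omega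
    have hrec' := hrec n₀ m hn₀ hm
    have hy : 0 < η (n₀ + m) := hηpos _ (by omega)
    have hXpos : 0 < η (m + 1) := hηpos _ (by omega)
    have hX : η (n₀ + m) ≤ η (m + 1) :=
      hηmono (m + 1) (n₀ + m) (by omega) (by omega)
    have hz' : 0 < C * ζ' n₀ m := mul_pos (by linarith) (hζ'pos n₀ m hn₀ hm)
    have hzle : C * ζ' n₀ m ≤ C * ζ n₀ :=
      mul_le_mul_of_nonneg_left (hζ'le n₀ m hn₀ hm) (by linarith)
    set y := η (n₀ + m) with hy_def
    set X := η (m + 1) with hX_def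
    set z := C * ζ' n₀ m with hz_def
    have h1 : η n₀ * y / (y + z) ≤ η n₀ * X / (X + z) := by
      rw [div_le_div_iff₀ (by linarith) (by linarith)]
      nlinarith [mul_le_mul_of_nonneg_left hX (le_of_lt (mul_pos hη0 hz'))]
    have h2 : η n₀ * y / (y + z) ≤ y := le_trans h1 hrec'
    have h3 : η n₀ * y ≤ y * (y + z) := by
      rw [div_le_iff₀ (by linarith)] at h2
      exact h2
    nlinarith
end

section
/- Let (η_n) be a non-increasing sequence of positive reals and (ζ_{n,m}) a double-indexed family of positive reals, non-decreasing in m, and let ζ_n = sup_m ζ_{n,m}; suppose η_{n+m} ≥ η_n η_{m+1}/(η_{m+1} + C ζ_{n,m}) and η_{n+m} ≤ η_n η_{m+1}/(η_{m+1} + C^{-1} ζ_{n,m}) for all n,m ≥ 1, where C > 1. If inf_n η_n > 0, then lim_{n→∞} ζ_n = 0. -/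
theorem stmt1 (η ζ : ℕ → ℝ) (ζ' : ℕ → ℕ → ℝ) (C : ℝ)
    (hC : 1 < C)
    (hηpos : ∀ n, 1 ≤ n → 0 < η n)
    (hηmono : ∀ n m, 1 ≤ n → n ≤ m → η m ≤ η n)
    (hζ'pos : ∀ n m, 1 ≤ n → 1 ≤ m → 0 < ζ' n m)
    (hζ'mono : ∀ n m₁ m₂, 1 ≤ n → 1 ≤ m₁ → m₁ ≤ m₂ → ζ' n m₁ ≤ ζ' n m₂)
    (hζsup : ∀ n, 1 ≤ n → IsLUB {x : ℝ | ∃ m, 1 ≤ m ∧ x = ζ' n m} (ζ n))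
    (hrecLow : ∀ n m, 1 ≤ n → 1 ≤ m →
      η n * η (m + 1) / (η (m + 1) + C * ζ' n m) ≤ η (n + m))
    (hrecUp : ∀ n m, 1 ≤ n → 1 ≤ m →
      η (n + m) ≤ η n * η (m + 1) / (η (m + 1) + C⁻¹ * ζ' n m))
    (hinf : ∃ ε > 0, ∀ n, 1 ≤ n → ε ≤ η n) :
    Filter.Tendsto ζ Filter.atTop (nhds 0) := by
  obtain ⟨ε, hε, hεle⟩ := hinf
  have hCpos : (0:ℝ) < C := lt_trans one_pos hC
  set g : ℕ → ℝ := fun n => η (n + 1) with hg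
  have hganti : Antitone g := fun a b hab => hηmono (a+1) (b+1) (by omega) (by omega)
  have hbdd : BddBelow (Set.range g) := ⟨ε, by rintro x ⟨n, rfl⟩; exact hεle _ (by omega)⟩
  set L := ⨅ n, g n with hL
  have hgL : Filter.Tendsto g Filter.atTop (nhds L) := tendsto_atTop_ciInf hganti hbdd
  have hLle : ∀ n, 1 ≤ n → L ≤ η n := by
    intro n hn
    have := ciInf_le hbdd (n - 1)
    simpa [hg, Nat.sub_add_cancel hn] using this
  have hηL : Filter.Tendsto η Filter.atTop (nhds L) := by
    have h1 : Filter.Tendsto (fun n => g (n - 1)) Filter.atTop (nhds L) :=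
      hgL.comp (Filter.tendsto_atTop_atTop.mpr fun b => ⟨b + 1, fun a ha => by omega⟩)
    refine h1.congr' ?_
    filter_upwards [Filter.eventually_ge_atTop 1] with n hn
    simp [hg, Nat.sub_add_cancel hn]
  have hη1 : 0 < η 1 := hηpos 1 le_rfl
  set K : ℝ := C * η 1 / ε with hK
  have key : ∀ n, 1 ≤ n → ζ n ≤ K * (η n - L) := by
    intro n hn
    refine (hζsup n hn).2 ?_
    rintro x ⟨m, hm, rfl⟩
    have hu := hrecUp n m hn hm
    have hζp := hζ'pos n m hn hm
    have hηm1 : 0 < η (m + 1) := hηpos (m+1) (by omega)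
    have hD : 0 < η (m + 1) + C⁻¹ * ζ' n m := by positivity
    have h1 : η (n + m) * (η (m + 1) + C⁻¹ * ζ' n m) ≤ η n * η (m + 1) :=
      (le_div_iff₀ hD).mp hu
    have h2 : C⁻¹ * ζ' n m * η (n + m) ≤ (η n - η (n + m)) * η (m + 1) := by nlinarith
    have hLnm : L ≤ η (n + m) := hLle (n + m) (by omega)
    have hεnm : ε ≤ η (n + m) := hεle (n + m) (by omega)
    have hm1 : η (m + 1) ≤ η 1 := hηmono 1 (m + 1) le_rfl (by omega)
    have hnL : 0 ≤ η n - L := sub_nonneg.mpr (hLle n hn)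
    have h3 : (η n - η (n + m)) * η (m + 1) ≤ (η n - L) * η 1 := by
      apply mul_le_mul (by linarith) hm1 (le_of_lt hηm1) hnL
    have h4 : C⁻¹ * ζ' n m * ε ≤ (η n - L) * η 1 := by
      refine le_trans ?_ (le_trans h2 h3)
      have : 0 < C⁻¹ * ζ' n m := by positivity
      nlinarith
    have hCinv : C⁻¹ * C = 1 := inv_mul_cancel₀ (ne_of_gt hCpos)
    have h5 : ζ' n m * ε ≤ C * ((η n - L) * η 1) := by
      calc ζ' n m * ε = C * (C⁻¹ * ζ' n m * ε) := by field_simp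
        _ ≤ _ := mul_le_mul_of_nonneg_left h4 hCpos.le
    rw [hK, div_mul_eq_mul_div, le_div_iff₀ hε]
    nlinarith [h5]
  have hlow : ∀ n, 1 ≤ n → 0 ≤ ζ n := by
    intro n hn
    exact le_trans (le_of_lt (hζ'pos n 1 hn le_rfl)) ((hζsup n hn).1 ⟨1, le_rfl, rfl⟩)
  have htend : Filter.Tendsto (fun n => K * (η n - L)) Filter.atTop (nhds 0) := by
    have h0 : Filter.Tendsto (fun n => η n - L) Filter.atTop (nhds (L - L)) :=
      hηL.sub tendsto_const_nhds
    have h1 := h0.const_mul K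
    simpa using h1
  refine squeeze_zero' ?_ ?_ htend
  · filter_upwards [Filter.eventually_ge_atTop 1] with n hn using hlow n hn
  · filter_upwards [Filter.eventually_ge_atTop 1] with n hn using key n hn
end

section
/- Let (η_n) be a non-increasing sequence of positive reals, C > 1, and (ζ_{n,m}) positive, non-decreasing in m with limit ζ_n as m → ∞, satisfying η_{n+m} ≤ η_n η_{m+1}/(η_{m+1} + C^{-1} ζ_{n,m}) for all n, m ≥ 1. If there exists n with C·η_n/ζ_n < 1, then η_k → 0 as k → ∞, and moreover η_k converges to 0 exponentially fast: there exist γ < 1, m₀ and K > 0 such that η_k ≤ K γ^{k} for all k. -/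
theorem stmt2 (η ζ : ℕ → ℝ) (ζ' : ℕ → ℕ → ℝ) (C : ℝ)
    (hC : 1 < C)
    (hηpos : ∀ n, 1 ≤ n → 0 < η n)
    (hηmono : ∀ n m, 1 ≤ n → n ≤ m → η m ≤ η n)
    (hζ'pos : ∀ n m, 1 ≤ n → 1 ≤ m → 0 < ζ' n m)
    (hζ'mono : ∀ n m₁ m₂, 1 ≤ n → 1 ≤ m₁ → m₁ ≤ m₂ → ζ' n m₁ ≤ ζ' n m₂)
    (hζlim : ∀ n, 1 ≤ n →
      Filter.Tendsto (fun m => ζ' n m) Filter.atTop (nhds (ζ n)))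
    (hrecUp : ∀ n m, 1 ≤ n → 1 ≤ m →
      η (n + m) ≤ η n * η (m + 1) / (η (m + 1) + C⁻¹ * ζ' n m))
    (hex : ∃ n, 1 ≤ n ∧ C * η n / ζ n < 1) :
    Filter.Tendsto η Filter.atTop (nhds 0) ∧
      ∃ γ K : ℝ, 0 < γ ∧ γ < 1 ∧ 0 < K ∧ ∀ k, 1 ≤ k → η k ≤ K * γ ^ k := by
  obtain ⟨n₀, hn₀, hlt⟩ := hex
  have hCpos : (0:ℝ) < C := lt_trans one_pos hC
  have hηn₀ : 0 < η n₀ := hηpos n₀ hn₀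
  have hζle : ∀ m, 1 ≤ m → ζ' n₀ m ≤ ζ n₀ := by
    intro m hm
    exact ge_of_tendsto (hζlim n₀ hn₀)
      (Filter.eventually_atTop.2 ⟨m, fun j hj => hζ'mono n₀ m j hn₀ hm hj⟩)
  have hζpos : 0 < ζ n₀ := lt_of_lt_of_le (hζ'pos n₀ 1 hn₀ le_rfl) (hζle 1 le_rfl)
  set θ : ℝ := (1 + C * η n₀ / ζ n₀) / 2 with hθdef
  have hx0 : 0 < C * η n₀ / ζ n₀ := by positivity
  have hθ0 : 0 < θ := by rw [hθdef]; linarith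
  have hθ1 : θ < 1 := by rw [hθdef]; linarith
  have hratio : C * η n₀ / ζ n₀ < θ := by rw [hθdef]; linarith
  rw [div_lt_iff₀ hζpos] at hratio
  -- hratio : C * η n₀ < θ * ζ n₀
  have key0 : C * (η n₀ / θ) < ζ n₀ := by
    rw [← mul_div_assoc, div_lt_iff₀ hθ0]; nlinarith
  -- eventually ζ' n₀ m > C * (η n₀ / θ)
  have hev : ∀ᶠ m in Filter.atTop, C * (η n₀ / θ) < ζ' n₀ m :=
    (hζlim n₀ hn₀).eventually (eventually_gt_nhds key0)
  obtain ⟨m₁, hm₁⟩ := Filter.eventually_atTop.1 hev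
  set M : ℕ := max m₁ 1 with hMdef
  have hM1 : 1 ≤ M := le_max_right _ _
  have step : ∀ m, M ≤ m → η (n₀ + m) ≤ θ * η (m + 1) := by
    intro m hm
    have h1m : 1 ≤ m := le_trans hM1 hm
    have hζ'big : C * (η n₀ / θ) < ζ' n₀ m := hm₁ m (le_trans (le_max_left _ _) hm)
    have hηm1 : 0 < η (m + 1) := hηpos _ (by omega)
    have hζ'p : 0 < ζ' n₀ m := hζ'pos n₀ m hn₀ h1m
    have hinvp : 0 < C⁻¹ * ζ' n₀ m := by positivity
    calc η (n₀ + m) ≤ η n₀ * η (m + 1) / (η (m + 1) + C⁻¹ * ζ' n₀ m) :=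
          hrecUp n₀ m hn₀ h1m
      _ ≤ η n₀ * η (m + 1) / (C⁻¹ * ζ' n₀ m) := by
          apply div_le_div_of_nonneg_left (by positivity) hinvp
          linarith
      _ ≤ θ * η (m + 1) := by
          rw [div_le_iff₀ hinvp]
          have h2 : η n₀ / θ < C⁻¹ * ζ' n₀ m := by
            rw [lt_inv_mul_iff₀ hCpos]; exact hζ'big
          rw [div_lt_iff₀ hθ0] at h2
          nlinarith
  rcases Nat.lt_or_ge n₀ 2 with hcase | hcase
  · -- n₀ = 1 : contradiction
    exfalso
    interval_cases n₀
    have h := step M le_rfl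
    rw [add_comm] at h
    have := hηpos (M + 1) (by omega)
    nlinarith
  · set p : ℕ := n₀ - 1 with hpdef
    have hp1 : 1 ≤ p := by omega
    have hn₀p : n₀ = p + 1 := by omega
    have step' : ∀ j, M + 1 ≤ j → η (j + p) ≤ θ * η j := by
      intro j hj
      obtain ⟨m, rfl⟩ : ∃ m, j = m + 1 := ⟨j - 1, by omega⟩
      have : n₀ + m = m + 1 + p := by omega
      have h := step m (by omega)
      rwa [this] at h
    have iter : ∀ k, η (M + 1 + k * p) ≤ θ ^ k * η (M + 1) := by
      intro k
      induction k with
      | zero => simp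
      | succ k ih =>
        have h := step' (M + 1 + k * p) (by omega)
        have heq : M + 1 + (k + 1) * p = M + 1 + k * p + p := by ring
        rw [heq]
        calc η (M + 1 + k * p + p) ≤ θ * η (M + 1 + k * p) := h
          _ ≤ θ * (θ ^ k * η (M + 1)) := mul_le_mul_of_nonneg_left ih hθ0.le
          _ = θ ^ (k + 1) * η (M + 1) := by ring
    set γ : ℝ := θ ^ ((p : ℝ)⁻¹) with hγdef
    have hγ0 : 0 < γ := Real.rpow_pos_of_pos hθ0 _
    have hγ1 : γ < 1 := Real.rpow_lt_one hθ0.le hθ1 (by positivity)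
    have hγp : γ ^ p = θ := by
      rw [hγdef, ← Real.rpow_natCast (θ ^ ((p:ℝ)⁻¹)) p, ← Real.rpow_mul hθ0.le,
        inv_mul_cancel₀ (by exact_mod_cast (by omega : p ≠ 0)), Real.rpow_one]
    set K₁ : ℝ := η (M + 1) / γ ^ (M + 1 + p) with hK₁def
    have hηM1 : 0 < η (M + 1) := hηpos _ (by omega)
    have hK₁0 : 0 < K₁ := by positivity
    have bound1 : ∀ k, M + 1 ≤ k → η k ≤ K₁ * γ ^ k := by
      intro k hk
      obtain ⟨q, r, hrlt, hqr⟩ : ∃ q r, r < p ∧ k - (M + 1) = p * q + r :=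
        ⟨(k - (M + 1)) / p, (k - (M + 1)) % p,
          Nat.mod_lt _ (by omega), (Nat.div_add_mod _ _).symm⟩
      have h1 : M + 1 + q * p ≤ k := by rw [Nat.mul_comm q p]; omega
      have h2 : k ≤ q * p + (M + 1 + p) := by rw [Nat.mul_comm q p]; omega
      have hA : η k ≤ η (M + 1 + q * p) := hηmono _ k (by omega) h1
      have hB : η (M + 1 + q * p) ≤ θ ^ q * η (M + 1) := iter q
      have hqp : θ ^ q = γ ^ (q * p) := by rw [mul_comm q p, pow_mul, hγp]
      have hpow : γ ^ (q * p + (M + 1 + p)) ≤ γ ^ k :=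
        pow_le_pow_of_le_one hγ0.le hγ1.le h2
      have hθq : θ ^ q ≤ γ ^ k / γ ^ (M + 1 + p) := by
        rw [le_div_iff₀ (by positivity), hqp, ← pow_add]
        exact hpow
      calc η k ≤ θ ^ q * η (M + 1) := le_trans hA hB
        _ ≤ (γ ^ k / γ ^ (M + 1 + p)) * η (M + 1) :=
            mul_le_mul_of_nonneg_right hθq hηM1.le
        _ = K₁ * γ ^ k := by rw [hK₁def]; ring
    have hη1 : 0 < η 1 := hηpos 1 le_rfl
    set K : ℝ := max K₁ (η 1 / γ ^ (M + 1)) with hKdef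
    have hK0 : 0 < K := lt_of_lt_of_le hK₁0 (le_max_left _ _)
    have final : ∀ k, 1 ≤ k → η k ≤ K * γ ^ k := by
      intro k hk
      rcases Nat.lt_or_ge k (M + 1) with h | h
      · have hηk : η k ≤ η 1 := hηmono 1 k le_rfl hk
        have hγk : γ ^ (M + 1) ≤ γ ^ k := pow_le_pow_of_le_one hγ0.le hγ1.le (by omega)
        have hK2 : η 1 / γ ^ (M + 1) ≤ K := le_max_right _ _
        calc η k ≤ η 1 := hηk
          _ = (η 1 / γ ^ (M + 1)) * γ ^ (M + 1) :=
              (div_mul_cancel₀ _ (pow_ne_zero _ hγ0.ne')).symm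
          _ ≤ K * γ ^ k :=
              mul_le_mul hK2 hγk (pow_pos hγ0 _).le hK0.le
      · calc η k ≤ K₁ * γ ^ k := bound1 k h
          _ ≤ K * γ ^ k :=
            mul_le_mul_of_nonneg_right (le_max_left _ _) (pow_pos hγ0 k).le
    constructor
    · apply squeeze_zero' (Filter.eventually_atTop.2 ⟨1, fun k hk => (hηpos k hk).le⟩)
        (Filter.eventually_atTop.2 ⟨1, fun k hk => final k hk⟩)
      have := (tendsto_pow_atTop_nhds_zero_of_lt_one hγ0.le hγ1).const_mul K
      simpa using this
    · exact ⟨γ, K, hγ0, hγ1, hK0, final⟩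
end

section
/- Let (η_n), (ζ_n) be non-increasing sequences of positive reals, C > 1, and (ζ_{n,m}) non-decreasing in m with limit ζ_n, satisfying both recursive inequalities η_n η_{m+1}/(η_{m+1}+Cζ_{n,m}) ≤ η_{n+m} ≤ η_n η_{m+1}/(η_{m+1}+C^{-1}ζ_{n,m}) for all n,m ≥ 1. If η_n/ζ_n is bounded from above (over all n), then η_n → 0 as n → ∞. -/
/-!
Let `a ≥ 0` be the limit of the non-increasing sequence `η`. If `a > 0`, letting `m → ∞` in the
upper recursive estimate gives `a + C⁻¹ ζ n ≤ η n` for every `n`. Together with `η n ≤ M ζ n` this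
yields `0 < a ≤ M C (η n - a)`, whose right-hand side tends to `0`.
-/

open Filter Topology

lemma exists_nonneg_tendsto_of_antitone_from_one {η : ℕ → ℝ}
    (hnonneg : ∀ n, 1 ≤ n → 0 ≤ η n) (hmono : ∀ n m, 1 ≤ n → n ≤ m → η m ≤ η n) :
    ∃ a, 0 ≤ a ∧ Tendsto η atTop (𝓝 a) := by
  have hanti : Antitone fun n => η (n + 1) :=
    antitone_nat_of_succ_le fun n => hmono (n + 1) (n + 1 + 1) (by omega) (by omega)
  have hbdd : BddBelow (Set.range fun n => η (n + 1)) :=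
    ⟨0, by rintro x ⟨n, rfl⟩; exact hnonneg (n + 1) (by omega)⟩
  refine ⟨⨅ n, η (n + 1), le_ciInf fun n => hnonneg (n + 1) (by omega), ?_⟩
  exact (tendsto_add_atTop_iff_nat 1).mp (tendsto_atTop_ciInf hanti hbdd)

lemma add_mul_le_of_tendsto_of_le_div {η ζ' : ℕ → ℝ} {a c z : ℝ} (n : ℕ)
    (ha : 0 < a) (hden : 0 < a + c * z)
    (hη : Tendsto η atTop (𝓝 a)) (hζ' : Tendsto ζ' atTop (𝓝 z))
    (hrec : ∀ᶠ m in atTop, η (n + m) ≤ η n * η (m + 1) / (η (m + 1) + c * ζ' m)) :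
    a + c * z ≤ η n := by
  have hηsucc : Tendsto (fun m => η (m + 1)) atTop (𝓝 a) := (tendsto_add_atTop_iff_nat 1).mpr hη
  have hshift : Tendsto (fun m => η (n + m)) atTop (𝓝 a) := by
    simpa only [add_comm n] using (tendsto_add_atTop_iff_nat n).mpr hη
  have hrhs : Tendsto (fun m => η n * η (m + 1) / (η (m + 1) + c * ζ' m)) atTop
      (𝓝 (η n * a / (a + c * z))) :=
    (tendsto_const_nhds.mul hηsucc).div (hηsucc.add (tendsto_const_nhds.mul hζ')) hden.ne'
  have hlim : a * (a + c * z) ≤ a * η n := by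
    have := le_of_tendsto_of_tendsto hshift hrhs hrec
    rwa [le_div_iff₀ hden, mul_comm (η n)] at this
  exact le_of_mul_le_mul_left hlim ha

theorem stmt5_general (η ζ : ℕ → ℝ) (ζ' : ℕ → ℕ → ℝ) (C : ℝ)
    (hC : 1 < C)
    (hηpos : ∀ n, 1 ≤ n → 0 < η n)
    (hζpos : ∀ n, 1 ≤ n → 0 < ζ n)
    (hηmono : ∀ n m, 1 ≤ n → n ≤ m → η m ≤ η n)
    (hζlim : ∀ n, 1 ≤ n →
      Filter.Tendsto (fun m => ζ' n m) Filter.atTop (nhds (ζ n)))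
    (hrecUp : ∀ n m, 1 ≤ n → 1 ≤ m →
      η (n + m) ≤ η n * η (m + 1) / (η (m + 1) + C⁻¹ * ζ' n m))
    (hbdd : ∃ M : ℝ, ∀ n, 1 ≤ n → η n / ζ n ≤ M) :
    Filter.Tendsto η Filter.atTop (nhds 0) := by
  obtain ⟨a, ha, hηa⟩ :=
    exists_nonneg_tendsto_of_antitone_from_one (fun n hn => (hηpos n hn).le) hηmono
  rcases ha.eq_or_lt with rfl | ha
  · exact hηa
  obtain ⟨M, hM⟩ := hbdd
  have hCpos : 0 < C := one_pos.trans hC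
  have hgap : ∀ n, 1 ≤ n → a + C⁻¹ * ζ n ≤ η n := fun n hn =>
    add_mul_le_of_tendsto_of_le_div n ha (by have := hζpos n hn; positivity) hηa (hζlim n hn)
      (eventually_atTop.2 ⟨1, fun m hm => hrecUp n m hn hm⟩)
  have hbound : ∀ n, 1 ≤ n → a ≤ M * C * (η n - a) := by
    intro n hn
    have hζn := hζpos n hn
    have hηM : η n ≤ M * ζ n := (div_le_iff₀ hζn).mp (hM n hn)
    have hζC : ζ n ≤ C * (η n - a) := by
      have := hgap n hn
      rw [← le_sub_iff_add_le', inv_mul_le_iff₀ hCpos] at this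
      exact this
    have hM0 : 0 ≤ M := nonneg_of_mul_nonneg_left (by linarith [hηpos n hn]) hζn
    calc a ≤ η n := le_of_add_le_of_nonneg_left (hgap n hn) (by positivity)
      _ ≤ M * ζ n := hηM
      _ ≤ M * C * (η n - a) := by rw [mul_assoc]; exact mul_le_mul_of_nonneg_left hζC hM0
  have hlim : a ≤ M * C * (a - a) :=
    ge_of_tendsto (tendsto_const_nhds.mul (hηa.sub_const a)) (eventually_atTop.2 ⟨1, hbound⟩)
  rw [sub_self, mul_zero] at hlim
  exact absurd hlim (not_le.mpr ha)

theorem stmt5 (η ζ : ℕ → ℝ) (ζ' : ℕ → ℕ → ℝ) (C : ℝ)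
    (hC : 1 < C)
    (hηpos : ∀ n, 1 ≤ n → 0 < η n)
    (hζpos : ∀ n, 1 ≤ n → 0 < ζ n)
    (hηmono : ∀ n m, 1 ≤ n → n ≤ m → η m ≤ η n)
    (hζmono : ∀ n m, 1 ≤ n → n ≤ m → ζ m ≤ ζ n)
    (hζ'mono : ∀ n m₁ m₂, 1 ≤ n → 1 ≤ m₁ → m₁ ≤ m₂ → ζ' n m₁ ≤ ζ' n m₂)
    (hζlim : ∀ n, 1 ≤ n →
      Filter.Tendsto (fun m => ζ' n m) Filter.atTop (nhds (ζ n)))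
    (hrecLow : ∀ n m, 1 ≤ n → 1 ≤ m →
      η n * η (m + 1) / (η (m + 1) + C * ζ' n m) ≤ η (n + m))
    (hrecUp : ∀ n m, 1 ≤ n → 1 ≤ m →
      η (n + m) ≤ η n * η (m + 1) / (η (m + 1) + C⁻¹ * ζ' n m))
    (hbdd : ∃ M : ℝ, ∀ n, 1 ≤ n → η n / ζ n ≤ M) :
    Filter.Tendsto η Filter.atTop (nhds 0) :=
  stmt5_general η ζ ζ' C hC hηpos hζpos hηmono hζlim hrecUp hbdd
end

section
/- Let (η_n), (ζ_n) be non-increasing sequences of positive reals, C > 1, (ζ_{n,m}) non-decreasing in m with limit ζ_n, satisfying the two-sided recursive inequalities of Theorem 3.6. If η_n/ζ_n is bounded from below by a positive constant (over all n), then ζ_n → 0 as n → ∞. -/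
theorem stmt6 (η ζ : ℕ → ℝ) (ζ' : ℕ → ℕ → ℝ) (C : ℝ)
    (hC : 1 < C)
    (hηpos : ∀ n, 1 ≤ n → 0 < η n)
    (hζpos : ∀ n, 1 ≤ n → 0 < ζ n)
    (hηmono : ∀ n m, 1 ≤ n → n ≤ m → η m ≤ η n)
    (hζmono : ∀ n m, 1 ≤ n → n ≤ m → ζ m ≤ ζ n)
    (hζ'mono : ∀ n m₁ m₂, 1 ≤ n → 1 ≤ m₁ → m₁ ≤ m₂ → ζ' n m₁ ≤ ζ' n m₂)
    (hζlim : ∀ n, 1 ≤ n →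
      Filter.Tendsto (fun m => ζ' n m) Filter.atTop (nhds (ζ n)))
    (hrecLow : ∀ n m, 1 ≤ n → 1 ≤ m →
      η n * η (m + 1) / (η (m + 1) + C * ζ' n m) ≤ η (n + m))
    (hrecUp : ∀ n m, 1 ≤ n → 1 ≤ m →
      η (n + m) ≤ η n * η (m + 1) / (η (m + 1) + C⁻¹ * ζ' n m))
    (hbdd : ∃ c : ℝ, 0 < c ∧ ∀ n, 1 ≤ n → c ≤ η n / ζ n) :
    Filter.Tendsto ζ Filter.atTop (nhds 0) := by
  obtain ⟨c, hc, hcle⟩ := hbdd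
  set e : ℝ := ⨅ n : ℕ, η (n + 1) with he_def
  have hanti : Antitone (fun n : ℕ => η (n + 1)) := fun a b hab =>
    hηmono (a + 1) (b + 1) (Nat.le_add_left 1 a) (by omega)
  have hbdl : BddBelow (Set.range fun n : ℕ => η (n + 1)) :=
    ⟨0, by rintro x ⟨n, rfl⟩; exact (hηpos (n + 1) (Nat.le_add_left 1 n)).le⟩
  have htend1 : Filter.Tendsto (fun n : ℕ => η (n + 1)) Filter.atTop (nhds e) :=
    tendsto_atTop_ciInf hanti hbdl
  have htendη : Filter.Tendsto η Filter.atTop (nhds e) :=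
    (Filter.tendsto_add_atTop_iff_nat 1).mp htend1
  have he0 : 0 ≤ e := le_ciInf fun n => (hηpos (n + 1) (Nat.le_add_left 1 n)).le
  have heleη : ∀ n, 1 ≤ n → e ≤ η n := by
    intro n hn
    have := ciInf_le hbdl (n - 1)
    simpa [Nat.sub_add_cancel hn] using this
  have hζle : ∀ n, 1 ≤ n → ζ n ≤ η n / c := by
    intro n hn
    have h := hcle n hn
    rw [le_div_iff₀ (hζpos n hn)] at h
    rw [le_div_iff₀ hc]
    linarith [h]
  rcases eq_or_lt_of_le he0 with he | he
  · -- e = 0 : squeeze ζ between 0 and η/c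
    apply squeeze_zero' (Filter.eventually_atTop.mpr ⟨1, fun n hn => (hζpos n hn).le⟩)
      (Filter.eventually_atTop.mpr ⟨1, fun n hn => hζle n hn⟩)
    have : Filter.Tendsto (fun n => η n / c) Filter.atTop (nhds (e / c)) :=
      htendη.div_const c
    rwa [← he, zero_div] at this
  · -- e > 0 : use upper recursive inequality
    have hkey : ∀ n, 1 ≤ n → ζ n ≤ C * (η n - e) := by
      intro n hn
      have hηn := hηpos n hn
      have hζn := hζpos n hn
      have hCinv : (0:ℝ) < C⁻¹ := inv_pos.mpr (lt_trans one_pos hC)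
      -- limits as m → ∞
      have hL : Filter.Tendsto (fun m => η (n + m)) Filter.atTop (nhds e) := by
        have : Filter.Tendsto (fun m => η (m + n)) Filter.atTop (nhds e) :=
          (Filter.tendsto_add_atTop_iff_nat n).mpr htendη
        simpa [add_comm] using this
      have hdenpos : (0:ℝ) < e + C⁻¹ * ζ n := by positivity
      have hR : Filter.Tendsto (fun m => η n * η (m + 1) / (η (m + 1) + C⁻¹ * ζ' n m))
          Filter.atTop (nhds (η n * e / (e + C⁻¹ * ζ n))) := by
        exact ((tendsto_const_nhds.mul htend1).div
          (htend1.add (tendsto_const_nhds.mul (hζlim n hn))) (ne_of_gt hdenpos))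
      have hle : e ≤ η n * e / (e + C⁻¹ * ζ n) := by
        refine le_of_tendsto_of_tendsto hL hR ?_
        exact Filter.eventually_atTop.mpr ⟨1, fun m hm => hrecUp n m hn hm⟩
      rw [le_div_iff₀ hdenpos] at hle
      have h2 : e + C⁻¹ * ζ n ≤ η n := by
        have := mul_le_mul_of_nonneg_left hle (le_of_lt (inv_pos.mpr he))
        nlinarith
      have hCpos : (0:ℝ) < C := lt_trans one_pos hC
      have : C⁻¹ * ζ n ≤ η n - e := by linarith
      calc ζ n = C * (C⁻¹ * ζ n) := by field_simp
        _ ≤ C * (η n - e) := by nlinarith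
    apply squeeze_zero' (Filter.eventually_atTop.mpr ⟨1, fun n hn => (hζpos n hn).le⟩)
      (Filter.eventually_atTop.mpr ⟨1, fun n hn => hkey n hn⟩)
    have : Filter.Tendsto (fun n => C * (η n - e)) Filter.atTop (nhds (C * (e - e))) :=
      tendsto_const_nhds.mul (htendη.sub tendsto_const_nhds)
    simpa using this
end

section
/- Let A, B ⊂ ℝ be closed intervals with B ⊂ (0, ∞), A symmetric about 0 (A = -A) with 0 ∈ A, and A, B linked. Let f : ℝ → ℝ be an even function that is a strict homeomorphism on (A ∩ [0,∞)) ∪ B. Then f(A) and f(B) are linked intervals. -/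
/-!
Linkedness only involves intersections and inclusions, so it is preserved by any map that is
injective on `A ∪ B`. Since `f` is even and `A` symmetric, `f(A) = f(A ∩ [0, ∞))`, and
`A ∩ [0, ∞)` is still linked with `B ⊆ (0, ∞)`: it has the same intersection with `B`, and it
contains `0 ∉ B`.
-/

/-- Two intervals `A` and `B` are linked if they intersect but
neither contains the other. -/
def Linked (A B : Set ℝ) : Prop :=
  (A ∩ B).Nonempty ∧ ¬ A ⊆ B ∧ ¬ B ⊆ A

open Set

namespace Linked

variable {A B : Set ℝ}

theorem image (h : Linked A B) {f : ℝ → ℝ} (hf : InjOn f (A ∪ B)) :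
    Linked (f '' A) (f '' B) := by
  obtain ⟨hAB, hAsubB, hBsubA⟩ := h
  refine ⟨?_, ?_, ?_⟩
  · rw [← hf.image_inter subset_union_left subset_union_right]
    exact hAB.image f
  · rwa [hf.image_subset_image_iff subset_union_left subset_union_right]
  · rwa [hf.image_subset_image_iff subset_union_right subset_union_left]

theorem inter_left (h : Linked A B) {C : Set ℝ} (hBC : B ⊆ C) {x : ℝ} (hx : x ∈ A ∩ C)
    (hxB : x ∉ B) : Linked (A ∩ C) B := by
  obtain ⟨⟨y, hyA, hyB⟩, -, hBsubA⟩ := h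
  exact ⟨⟨y, ⟨hyA, hBC hyB⟩, hyB⟩, fun hsub ↦ hxB (hsub hx),
    fun hsub ↦ hBsubA (hsub.trans inter_subset_left)⟩

end Linked

theorem image_eq_image_inter_Ici_of_even {f : ℝ → ℝ} (heven : ∀ x, f (-x) = f x) {A : Set ℝ}
    (hA : ∀ x ∈ A, -x ∈ A) : f '' A = f '' (A ∩ Ici 0) := by
  refine Subset.antisymm ?_ (image_mono inter_subset_left)
  rintro _ ⟨x, hx, rfl⟩
  rcases le_total 0 x with hx0 | hx0
  · exact ⟨x, ⟨hx, hx0⟩, rfl⟩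
  · exact ⟨-x, ⟨hA x hx, neg_nonneg.2 hx0⟩, heven x⟩

theorem stmt8_general (f : ℝ → ℝ) (a b₁ b₂ : ℝ) (A B : Set ℝ)
    (hA : A = Set.Icc (-a) a)
    (hB : B = Set.Icc b₁ b₂) (hb : 0 < b₁ ∧ b₁ ≤ b₂)
    (hlinked : Linked A B)
    (heven : ∀ x, f (-x) = f x)
    (hinj : Set.InjOn f ((A ∩ Set.Ici 0) ∪ B)) :
    Linked (f '' A) (f '' B) := by
  subst hA hB
  have hA_symm : ∀ x ∈ Icc (-a) a, -x ∈ Icc (-a) a := fun x hx ↦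
    ⟨neg_le_neg hx.2, by linarith [hx.1]⟩
  have hB_nonneg : Icc b₁ b₂ ⊆ Ici 0 := fun x hx ↦ hb.1.le.trans hx.1
  have hzero_mem : (0 : ℝ) ∈ Icc (-a) a ∩ Ici 0 := by
    obtain ⟨x, hxA, -⟩ := hlinked.1
    exact ⟨⟨by linarith [hxA.1, hxA.2], by linarith [hxA.1, hxA.2]⟩, mem_Ici.2 le_rfl⟩
  have hzero_not_mem : (0 : ℝ) ∉ Icc b₁ b₂ := fun h ↦ hb.1.not_ge h.1
  rw [image_eq_image_inter_Ici_of_even heven hA_symm]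
  exact (hlinked.inter_left hB_nonneg hzero_mem hzero_not_mem).image hinj

theorem stmt8 (f : ℝ → ℝ) (a b₁ b₂ : ℝ) (A B : Set ℝ)
    (hA : A = Set.Icc (-a) a) (ha : 0 ≤ a)
    (hB : B = Set.Icc b₁ b₂) (hb : 0 < b₁ ∧ b₁ ≤ b₂)
    (hlinked : Linked A B)
    (heven : ∀ x, f (-x) = f x)
    (hcont : ContinuousOn f ((A ∩ Set.Ici 0) ∪ B))
    (hinj : Set.InjOn f ((A ∩ Set.Ici 0) ∪ B)) :
    Linked (f '' A) (f '' B) :=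
  stmt8_general f a b₁ b₂ A B hA hB hb hlinked heven hinj
end
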